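/- arXiv:2302.03798 — 2 statements merged into one kernel-verified Lean document; each statement's English description precedes it below -/
import Mathlib

section
/- Assume in addition that each f_j is an open map and that μ(C) > 0 for every cylinder C. Then for every r > 0 there exists c > 0 such that for every x ∈ Δ₀ with the property that μ(B(x, s)) > 0 for all s > 0, there exists a cylinder C with C ⊆ B(x, r), diam(C) > c, and μ(C) > c. -/
/-! The cylinders of length `n` cover `Δ₀` up to a `μ`-null set and have diameter at most
`λⁿ diam Δ₀`, so for large `n` a ball `B(y, r / 4)` of positive measure meets one of them, which
then lies in `B(y, r / 2)`. This cylinder has positive measure, and positive diameter because it is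
a nonempty open set; it serves every `x ∈ B(y, r / 2)`, as it lies in `B(x, r)`. The support of `μ`
is a compact subset of `closure Δ₀`, so finitely many `y` suffice, and `c` is the minimum of the
finitely many diameters and measures obtained. -/

open MeasureTheory

/-- `wordMap f w` is the composition `f_{j₁} ∘ ⋯ ∘ f_{j_n}` for the word `w = (j₁, …, j_n)`.
The sets `wordMap f w '' Δ₀` are the cylinders. -/
def wordMap {J E : Type*} (f : J → E → E) : List J → E → E
  | [] => id
  | j :: w => f j ∘ wordMap f w

open Metric Set Filter Topology
open scoped NNReal ENNReal

theorem LipschitzOnWith.diam_image_le {E F : Type*} [PseudoMetricSpace E] [PseudoMetricSpace F]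
    {K : ℝ≥0} {g : E → F} {s : Set E} (hg : LipschitzOnWith K g s)
    (hs : Bornology.IsBounded s) :
    diam (g '' s) ≤ K * diam s :=
  diam_le_of_forall_dist_le (by positivity) <| by
    rintro _ ⟨x, hx, rfl⟩ _ ⟨y, hy, rfl⟩
    exact (hg.dist_le_mul x hx y hy).trans (by gcongr; exact dist_le_diam_of_mem hs hx hy)

theorem IsOpen.diam_pos {X : Type*} [MetricSpace X] [PerfectSpace X] {U : Set X} (hU : IsOpen U)
    (hne : U.Nonempty) (hb : Bornology.IsBounded U) : 0 < diam U :=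
  let ⟨x, hx⟩ := hne
  Metric.diam_pos (infinite_of_mem_nhds x (hU.mem_nhds hx)).nontrivial hb

theorem IsCompact.exists_pos_forall_of_forall_nhdsWithin {X : Type*} [TopologicalSpace X]
    {K : Set X} (hK : IsCompact K) {P : X → ℝ → Prop} (hP : ∀ x, Antitone (P x))
    (h : ∀ y ∈ K, ∃ U ∈ 𝓝[K] y, ∃ c > 0, ∀ x ∈ U, P x c) :
    ∃ c > 0, ∀ x ∈ K, P x c := by
  refine hK.induction_on (p := fun t ↦ ∃ c > 0, ∀ x ∈ t, P x c) ⟨1, one_pos, by simp⟩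
    (fun _ _ hst ⟨c, hc, ht⟩ ↦ ⟨c, hc, fun x hx ↦ ht x (hst hx)⟩) ?_ h
  rintro s t ⟨c, hc, hs⟩ ⟨c', hc', ht⟩
  refine ⟨min c c', lt_min hc hc', fun x hx ↦ hx.elim ?_ ?_⟩
  · exact fun hx ↦ hP x (min_le_left c c') (hs x hx)
  · exact fun hx ↦ hP x (min_le_right c c') (ht x hx)

theorem ENNReal.exists_pos_lt_and_ofReal_lt {a : ℝ} {m : ℝ≥0∞} (ha : 0 < a) (hm : 0 < m) :
    ∃ c > 0, c < a ∧ ENNReal.ofReal c < m := by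
  obtain ⟨c, -, hc0, hc⟩ :=
    ENNReal.lt_iff_exists_real_btwn.1 (lt_min (ENNReal.ofReal_pos.2 ha) hm)
  exact ⟨c, ENNReal.ofReal_pos.1 hc0,
    (ENNReal.ofReal_lt_ofReal_iff ha).1 (hc.trans_le (min_le_left _ _)),
    hc.trans_le (min_le_right _ _)⟩

section Cylinders

variable {J E : Type*} (f : J → E → E) {s : Set E}

theorem mapsTo_wordMap (hmaps : ∀ j, MapsTo (f j) s s) : ∀ w : List J, MapsTo (wordMap f w) s s
  | [] => mapsTo_id s
  | j :: w => (hmaps j).comp (mapsTo_wordMap hmaps w)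

theorem isOpen_image_wordMap [TopologicalSpace E] (hs : IsOpen s) (hmaps : ∀ j, MapsTo (f j) s s)
    (hopen : ∀ j, ∀ V : Set E, IsOpen V → V ⊆ s → IsOpen (f j '' V)) :
    ∀ w : List J, IsOpen (wordMap f w '' s)
  | [] => by simpa [wordMap] using hs
  | j :: w => by
    rw [wordMap, image_comp]
    exact hopen j _ (isOpen_image_wordMap hs hmaps hopen w) (mapsTo_wordMap f hmaps w).image_subset

theorem lipschitzOnWith_wordMap [PseudoEMetricSpace E] {K : ℝ≥0} (hmaps : ∀ j, MapsTo (f j) s s)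
    (hlip : ∀ j, LipschitzOnWith K (f j) s) :
    ∀ w : List J, LipschitzOnWith (K ^ w.length) (wordMap f w) s
  | [] => by simpa [wordMap] using LipschitzWith.id.lipschitzOnWith
  | j :: w => by
    rw [wordMap, List.length_cons, pow_succ']
    exact (hlip j).comp (lipschitzOnWith_wordMap hmaps hlip w) (mapsTo_wordMap f hmaps w)

theorem eventually_diam_image_wordMap_lt [PseudoMetricSpace E] {K : ℝ≥0}
    (hs : Bornology.IsBounded s)
    (hmaps : ∀ j, MapsTo (f j) s s) (hlip : ∀ j, LipschitzOnWith K (f j) s) (hK : K < 1)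
    {ε : ℝ} (hε : 0 < ε) :
    ∀ᶠ n in atTop, ∀ w : List J, w.length = n → diam (wordMap f w '' s) < ε := by
  have hlim : Tendsto (fun n ↦ (K : ℝ) ^ n * diam s) atTop (𝓝 0) := by
    simpa using (tendsto_pow_atTop_nhds_zero_of_lt_one K.coe_nonneg hK).mul_const (diam s)
  filter_upwards [hlim.eventually (gt_mem_nhds hε)] with n hn w hw
  refine ((lipschitzOnWith_wordMap f hmaps hlip w).diam_image_le hs).trans_lt ?_
  rwa [hw, NNReal.coe_pow]

theorem exists_image_wordMap_subset_ball [MetricSpace E] [MeasurableSpace E]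
    [OpensMeasurableSpace E] {μ : Measure E} [IsFiniteMeasure μ] {K : ℝ≥0}
    (hs : IsOpen s) (hsb : Bornology.IsBounded s) (hmaps : ∀ j, MapsTo (f j) s s)
    (hopen : ∀ j, ∀ V : Set E, IsOpen V → V ⊆ s → IsOpen (f j '' V))
    (hlip : ∀ j, LipschitzOnWith K (f j) s) (hK : K < 1) (hμs : μ sᶜ = 0)
    (hfull : ∀ n : ℕ, 1 ≤ n → μ (⋃ w ∈ {w : List J | w.length = n}, wordMap f w '' s) = μ s)
    {y : E} {ρ : ℝ} (hy : 0 < μ (ball y ρ)) :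
    ∃ w ≠ [], wordMap f w '' s ⊆ ball y (2 * ρ) := by
  have hρ : 0 < ρ := nonempty_ball.1 (nonempty_of_measure_ne_zero hy.ne')
  obtain ⟨n, hn, hdiam⟩ := ((eventually_ge_atTop 1).and
    (eventually_diam_image_wordMap_lt f hsb hmaps hlip hK hρ)).exists
  set U := ⋃ w ∈ {w : List J | w.length = n}, wordMap f w '' s
  have hUs : U =ᵐ[μ] s := ae_eq_of_subset_of_measure_ge
    (iUnion₂_subset fun w _ ↦ (mapsTo_wordMap f hmaps w).image_subset) (hfull n hn).ge
    (isOpen_biUnion fun w _ ↦ isOpen_image_wordMap f hs hmaps hopen w).nullMeasurableSet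
    (measure_ne_top μ s)
  have hU : μ Uᶜ = 0 := ae_eq_univ.1 (hUs.trans (ae_eq_univ.2 hμs))
  obtain ⟨z, hzy, hzU⟩ :=
    nonempty_of_measure_ne_zero ((measure_inter_conull hU).trans_ne hy.ne')
  obtain ⟨w, hw, hzw⟩ := mem_iUnion₂.1 hzU
  have hwn : w.length = n := hw
  refine ⟨w, List.ne_nil_of_length_pos (hn.trans_eq hwn.symm), fun u hu ↦ ?_⟩
  have hCb : Bornology.IsBounded (wordMap f w '' s) :=
    hsb.subset (mapsTo_wordMap f hmaps w).image_subset
  calc dist u y ≤ dist u z + dist z y := dist_triangle u z y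
    _ < ρ + ρ := add_lt_add_of_le_of_lt
        ((dist_le_diam_of_mem hCb hu hzw).trans (hdiam w hw).le) hzy
    _ = 2 * ρ := by ring

end Cylinders

theorem cylinder_diam_measure_lower_bound_general
    {d : ℕ} (hd : 1 ≤ d) {J : Type*}
    (Δ₀ : Set (EuclideanSpace ℝ (Fin d)))
    (hbdd : Bornology.IsBounded Δ₀) (hopen : IsOpen Δ₀)
    (lam : ℝ) (hlam0 : 0 < lam) (hlam1 : lam < 1)
    (f : J → EuclideanSpace ℝ (Fin d) → EuclideanSpace ℝ (Fin d))
    (hmaps : ∀ j, Set.MapsTo (f j) Δ₀ Δ₀)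
    (hlip : ∀ j, ∀ x ∈ Δ₀, ∀ y ∈ Δ₀, dist (f j x) (f j y) ≤ lam * dist x y)
    (μ : Measure (EuclideanSpace ℝ (Fin d))) [IsFiniteMeasure μ]
    (hμsupp : μ Δ₀ᶜ = 0)
    (hfull : ∀ n : ℕ, 1 ≤ n →
      μ (⋃ w ∈ {w : List J | w.length = n}, wordMap f w '' Δ₀) = μ Δ₀)
    (hopenmap : ∀ j, ∀ V : Set (EuclideanSpace ℝ (Fin d)), IsOpen V → V ⊆ Δ₀ →
      IsOpen (f j '' V))
    (hcylpos : ∀ w : List J, w ≠ [] → 0 < μ (wordMap f w '' Δ₀)) :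
    ∀ r : ℝ, 0 < r → ∃ c : ℝ, 0 < c ∧
      ∀ x ∈ Δ₀, (∀ s : ℝ, 0 < s → 0 < μ (Metric.ball x s)) →
        ∃ w : List J, w ≠ [] ∧ wordMap f w '' Δ₀ ⊆ Metric.ball x r ∧
          c < Metric.diam (wordMap f w '' Δ₀) ∧
          ENNReal.ofReal c < μ (wordMap f w '' Δ₀) := by
  intro r hr
  have : Nonempty (Fin d) := ⟨⟨0, hd⟩⟩
  have hlipOn (j : J) : LipschitzOnWith ⟨lam, hlam0.le⟩ (f j) Δ₀ :=
    LipschitzOnWith.of_dist_le_mul (hlip j)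
  have hsupp : IsCompact μ.support := hbdd.isCompact_closure.of_isClosed_subset
    Measure.isClosed_support (Measure.support_subset_of_isClosed isClosed_closure
      (mem_of_superset (mem_ae_iff.2 hμsupp) subset_closure))
  have hlocal : ∀ y ∈ μ.support, ∃ U ∈ 𝓝[μ.support] y, ∃ c > 0, ∀ x ∈ U, ∃ w ≠ [],
      wordMap f w '' Δ₀ ⊆ ball x r ∧ c < diam (wordMap f w '' Δ₀) ∧
        ENNReal.ofReal c < μ (wordMap f w '' Δ₀) := by
    intro y hy
    obtain ⟨w, hw, hwy⟩ := exists_image_wordMap_subset_ball f hopen hbdd hmaps hopenmap hlipOn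
      hlam1 hμsupp hfull
      (nhds_basis_ball.mem_measureSupport.1 hy (r / 4) (by positivity))
    have hdiam : 0 < diam (wordMap f w '' Δ₀) :=
      (isOpen_image_wordMap f hopen hmaps hopenmap w).diam_pos
        (nonempty_of_measure_ne_zero (hcylpos w hw).ne')
        (hbdd.subset (mapsTo_wordMap f hmaps w).image_subset)
    obtain ⟨c, hc, hcd, hcμ⟩ := ENNReal.exists_pos_lt_and_ofReal_lt hdiam (hcylpos w hw)
    refine ⟨ball y (r / 2), mem_nhdsWithin_of_mem_nhds (ball_mem_nhds y (by positivity)), c, hc,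
      fun x hx ↦ ⟨w, hw, hwy.trans (ball_subset_ball' ?_), hcd, hcμ⟩⟩
    rw [mem_ball, dist_comm] at hx
    linarith
  obtain ⟨c, hc, hcsupp⟩ := hsupp.exists_pos_forall_of_forall_nhdsWithin
    (fun x c c' hcc' ⟨w, hw, hsub, hdiam, hμ⟩ ↦
      ⟨w, hw, hsub, hcc'.trans_lt hdiam, (ENNReal.ofReal_le_ofReal hcc').trans_lt hμ⟩) hlocal
  exact ⟨c, hc, fun x _ hx ↦ hcsupp x (nhds_basis_ball.mem_measureSupport.2 hx)⟩

/-- **Uniform lower bound on diameters and measures of cylinders inside small balls.**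
In the countable contracting iterated function system setting, assuming additionally that
each branch is an open map and that every cylinder has positive measure, for every `r > 0`
there is `c > 0` such that every point of `Δ₀` all of whose balls have positive measure
admits a cylinder inside `B(x, r)` of diameter `> c` and measure `> c`. -/
theorem cylinder_diam_measure_lower_bound
    {d : ℕ} (hd : 1 ≤ d) {J : Type*} [Countable J]
    (Δ₀ : Set (EuclideanSpace ℝ (Fin d)))
    (hne : Δ₀.Nonempty) (hbdd : Bornology.IsBounded Δ₀) (hopen : IsOpen Δ₀)
    (lam : ℝ) (hlam0 : 0 < lam) (hlam1 : lam < 1)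
    (f : J → EuclideanSpace ℝ (Fin d) → EuclideanSpace ℝ (Fin d))
    (hmaps : ∀ j, Set.MapsTo (f j) Δ₀ Δ₀)
    (hlip : ∀ j, ∀ x ∈ Δ₀, ∀ y ∈ Δ₀, dist (f j x) (f j y) ≤ lam * dist x y)
    (μ : Measure (EuclideanSpace ℝ (Fin d))) [IsFiniteMeasure μ]
    (hμne : μ ≠ 0) (hμsupp : μ Δ₀ᶜ = 0)
    (hdisj : ∀ n : ℕ, 1 ≤ n → ∀ w w' : List J, w.length = n → w'.length = n → w ≠ w' →
      Disjoint (wordMap f w '' Δ₀) (wordMap f w' '' Δ₀))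
    (hfull : ∀ n : ℕ, 1 ≤ n →
      μ (⋃ w ∈ {w : List J | w.length = n}, wordMap f w '' Δ₀) = μ Δ₀)
    (hopenmap : ∀ j, ∀ V : Set (EuclideanSpace ℝ (Fin d)), IsOpen V → V ⊆ Δ₀ →
      IsOpen (f j '' V))
    (hcylpos : ∀ w : List J, w ≠ [] → 0 < μ (wordMap f w '' Δ₀)) :
    ∀ r : ℝ, 0 < r → ∃ c : ℝ, 0 < c ∧
      ∀ x ∈ Δ₀, (∀ s : ℝ, 0 < s → 0 < μ (Metric.ball x s)) →
        ∃ w : List J, w ≠ [] ∧ wordMap f w '' Δ₀ ⊆ Metric.ball x r ∧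
          c < Metric.diam (wordMap f w '' Δ₀) ∧
          ENNReal.ofReal c < μ (wordMap f w '' Δ₀) :=
  cylinder_diam_measure_lower_bound_general hd Δ₀ hbdd hopen lam hlam0 hlam1 f hmaps hlip μ hμsupp
    hfull hopenmap hcylpos
end

section
/- Let E be a complex Hilbert space, C′ ≥ 0, and for each j ∈ J let U_j : Λ → B(E) be a map whose values are unitary operators on E, with ‖U_j(x) − U_j(x′)‖_op ≤ C′·d(x, x′) for all x, x′ ∈ Λ. Let h : Λ → ℝ be a bounded positive function, B ≥ 0, and H : Λ → E a bounded map with ‖H(x) − H(x′)‖ ≤ B·h(x)·d(x, x′) for all x, x′ ∈ Λ. Define MH(x) = ∑_{j∈J} e^{φ_j(x)} U_j(x)(H(g_j(x))), L‖H‖(x) = ∑_{j∈J} e^{φ_j(x)} ‖H(g_j(x))‖, and Lh(x) = ∑_{j∈J} e^{φ_j(x)} h(g_j(x)). Then for all x, x′ ∈ Λ: ‖MH(x) − MH(x′)‖ ≤ e^{C·d(x,x′)}·((C + C′)·L‖H‖(x) + B·κ·Lh(x))·d(x, x′). -/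
/-!
Split each term of `MH(x) - MH(x')` as
`(e^{φ_j x} - e^{φ_j x'}) U_j(x) v + e^{φ_j x'} (U_j(x) - U_j(x')) v + e^{φ_j x'} U_j(x') (v - v')`
with `v = H(g_j x)`, `v' = H(g_j x')`. Since the `U_j` are isometries, the three pieces are
controlled by the Lipschitz constants of `φ_j`, `U_j` and `H ∘ g_j` respectively, and
`|e^a - e^b| ≤ |a - b| e^{|a - b|} e^a` accounts for the factor `e^{C d(x,x')}`.
Summing the termwise bounds gives the estimate.
-/

open Real

theorem Real.exp_sub_exp_le_mul_exp (a b : ℝ) : exp a - exp b ≤ (a - b) * exp a := by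
  have h := mul_le_mul_of_nonneg_left (add_one_le_exp (b - a)) (exp_pos a).le
  rw [← exp_add, add_sub_cancel] at h
  linarith

theorem Real.abs_exp_sub_exp_le {s s' t : ℝ} (h : |s - s'| ≤ t) :
    |exp s - exp s'| ≤ t * exp t * exp s := by
  have ht : 0 ≤ t := (abs_nonneg _).trans h
  obtain ⟨h₁, h₂⟩ := abs_le.mp h
  rw [abs_sub_le_iff]
  constructor
  · calc exp s - exp s' ≤ (s - s') * exp s := exp_sub_exp_le_mul_exp s s'
      _ ≤ t * exp s := by gcongr
      _ ≤ t * exp t * exp s := by gcongr; exact le_mul_of_one_le_right ht (one_le_exp ht)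
  · calc exp s' - exp s ≤ (s' - s) * exp s' := exp_sub_exp_le_mul_exp s' s
      _ ≤ t * exp (t + s) := by gcongr <;> linarith
      _ = t * exp t * exp s := by rw [exp_add, mul_assoc]

theorem Summable.smul_of_norm_le {ι E : Type*} [NormedAddCommGroup E] [NormedSpace ℝ E]
    [CompleteSpace E] {w : ι → ℝ} (hw : Summable w) (hw₀ : ∀ i, 0 ≤ w i) {f : ι → E} {M : ℝ}
    (hf : ∀ i, ‖f i‖ ≤ M) : Summable fun i => w i • f i :=
  .of_norm_bounded (hw.mul_right M) fun i => by
    rw [norm_smul, Real.norm_of_nonneg (hw₀ i)]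
    exact mul_le_mul_of_nonneg_left (hf i) (hw₀ i)

section IsometricCocycle

variable {𝕜 E : Type*} [RCLike 𝕜] [NormedAddCommGroup E] [NormedSpace 𝕜 E] [NormedSpace ℝ E]
  {A A' : E →L[𝕜] E}

theorem norm_smul_apply_sub_smul_apply_le (hA : ∀ w, ‖A w‖ = ‖w‖) (hA' : ∀ w, ‖A' w‖ = ‖w‖)
    (a a' : ℝ) (v v' : E) :
    ‖a • A v - a' • A' v'‖ ≤ |a - a'| * ‖v‖ + |a'| * (‖A - A'‖ * ‖v‖ + ‖v - v'‖) := by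
  have hsplit : a • A v - a' • A' v' = (a - a') • A v + a' • ((A - A') v + A' (v - v')) := by
    simp only [sub_apply, map_sub, smul_sub, sub_smul, smul_add]
    abel
  rw [hsplit]
  refine (norm_add_le _ _).trans (add_le_add ?_ ?_)
  · rw [norm_smul, Real.norm_eq_abs, hA]
  · rw [norm_smul, Real.norm_eq_abs]
    refine mul_le_mul_of_nonneg_left ((norm_add_le _ _).trans (add_le_add ?_ ?_)) (abs_nonneg _)
    · exact (A - A').le_opNorm v
    · rw [hA']

theorem norm_exp_smul_apply_sub_exp_smul_apply_le (hA : ∀ w, ‖A w‖ = ‖w‖)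
    (hA' : ∀ w, ‖A' w‖ = ‖w‖) {s s' t t' δ : ℝ} {v v' : E} (hs : |s - s'| ≤ t)
    (hAA' : ‖A - A'‖ ≤ t') (hv : ‖v - v'‖ ≤ δ) :
    ‖exp s • A v - exp s' • A' v'‖ ≤ exp t * exp s * ((t + t') * ‖v‖ + δ) := by
  have hs' : exp s' ≤ exp t * exp s := by
    rw [← exp_add]
    exact exp_le_exp.mpr (by linarith [(abs_le.mp hs).1])
  calc ‖exp s • A v - exp s' • A' v'‖
      ≤ |exp s - exp s'| * ‖v‖ + |exp s'| * (‖A - A'‖ * ‖v‖ + ‖v - v'‖) :=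
        norm_smul_apply_sub_smul_apply_le hA hA' _ _ v v'
    _ ≤ t * exp t * exp s * ‖v‖ + exp t * exp s * (t' * ‖v‖ + δ) := by
        rw [abs_of_pos (exp_pos s')]
        gcongr
        exact abs_exp_sub_exp_le hs
    _ = exp t * exp s * ((t + t') * ‖v‖ + δ) := by ring

end IsometricCocycle

theorem lasota_yorke_vector_general
    {Λ : Type*} [MetricSpace Λ] {J : Type*}
    {E : Type*} [NormedAddCommGroup E] [InnerProductSpace ℂ E] [CompleteSpace E]
    (κ C C' : ℝ)
    (g : J → Λ → Λ) (hg : ∀ j x x', dist (g j x) (g j x') ≤ κ * dist x x')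
    (φ : J → Λ → ℝ) (hφ : ∀ j x x', |φ j x - φ j x'| ≤ C * dist x x')
    (hsum : ∀ x, Summable fun j => Real.exp (φ j x))
    (U : J → Λ → E →L[ℂ] E)
    (hunit : ∀ j x, U j x ∈ unitary (E →L[ℂ] E))
    (hULip : ∀ j x x', ‖U j x - U j x'‖ ≤ C' * dist x x')
    (h : Λ → ℝ) (hpos : ∀ x, 0 < h x) (hhbdd : ∃ M, ∀ x, h x ≤ M)
    (B : ℝ) (hB : 0 ≤ B)
    (H : Λ → E) (hHbdd : ∃ M, ∀ x, ‖H x‖ ≤ M)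
    (hHLip : ∀ x x', ‖H x - H x'‖ ≤ B * h x * dist x x') :
    ∀ x x',
      ‖(∑' j, Real.exp (φ j x) • (U j x (H (g j x)))) -
        (∑' j, Real.exp (φ j x') • (U j x' (H (g j x'))))‖
      ≤ Real.exp (C * dist x x') *
          ((C + C') * (∑' j, Real.exp (φ j x) * ‖H (g j x)‖) +
            B * κ * (∑' j, Real.exp (φ j x) * h (g j x))) * dist x x' := by
  intro x x'
  obtain ⟨M, hM⟩ := hHbdd
  obtain ⟨Mh, hMh⟩ := hhbdd
  have hexp₀ (y : Λ) (j : J) : 0 ≤ exp (φ j y) := (exp_pos _).le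
  have hMH (y : Λ) : Summable fun j => exp (φ j y) • U j y (H (g j y)) :=
    (hsum y).smul_of_norm_le (hexp₀ y) fun j => by
      rw [(U j y).norm_map_of_mem_unitary (hunit j y)]; exact hM _
  have hLH : Summable fun j => exp (φ j x) * ‖H (g j x)‖ :=
    (hsum x).smul_of_norm_le (hexp₀ x) (M := M) fun j => by rw [norm_norm]; exact hM _
  have hLh : Summable fun j => exp (φ j x) * h (g j x) :=
    (hsum x).smul_of_norm_le (hexp₀ x) (M := Mh) fun j => by
      rw [Real.norm_of_nonneg (hpos _).le]; exact hMh _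
  rw [← (hMH x).tsum_sub (hMH x')]
  refine tsum_of_norm_bounded
    ((((hLH.hasSum.mul_left (C + C')).add (hLh.hasSum.mul_left (B * κ))).mul_left _).mul_right _)
    fun j => ?_
  have hHg : ‖H (g j x) - H (g j x')‖ ≤ B * h (g j x) * (κ * dist x x') :=
    (hHLip _ _).trans (mul_le_mul_of_nonneg_left (hg j x x') (mul_nonneg hB (hpos _).le))
  refine (norm_exp_smul_apply_sub_exp_smul_apply_le ((U j x).norm_map_of_mem_unitary (hunit j x))
    ((U j x').norm_map_of_mem_unitary (hunit j x')) (hφ j x x') (hULip j x x') hHg).trans_eq ?_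
  ring

/-- **Vector-valued Lasota–Yorke estimate with unitary cocycle.** For a countable family of
`κ`-contractions `g_j`, `C`-Lipschitz potentials `φ_j` with `∑_j e^{φ_j(x)} < ∞`, and
`C′`-Lipschitz families of unitary operators `U_j` on a complex Hilbert space `E`, if
`‖H(x) − H(x′)‖ ≤ B·h(x)·d(x,x′)` with `h` bounded positive and `H` bounded, then the twisted
transfer operator `MH(x) = ∑_j e^{φ_j(x)} U_j(x)(H(g_j(x)))` satisfies
`‖MH(x) − MH(x′)‖ ≤ e^{C·d(x,x′)}·((C + C′)·L‖H‖(x) + B·κ·Lh(x))·d(x,x′)`. -/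
theorem lasota_yorke_vector
    {Λ : Type*} [MetricSpace Λ] {J : Type*} [Countable J]
    {E : Type*} [NormedAddCommGroup E] [InnerProductSpace ℂ E] [CompleteSpace E]
    (κ C C' : ℝ) (hκ0 : 0 ≤ κ) (hκ1 : κ < 1) (hC : 0 ≤ C) (hC' : 0 ≤ C')
    (g : J → Λ → Λ) (hg : ∀ j x x', dist (g j x) (g j x') ≤ κ * dist x x')
    (φ : J → Λ → ℝ) (hφ : ∀ j x x', |φ j x - φ j x'| ≤ C * dist x x')
    (hsum : ∀ x, Summable fun j => Real.exp (φ j x))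
    (U : J → Λ → E →L[ℂ] E)
    (hunit : ∀ j x, U j x ∈ unitary (E →L[ℂ] E))
    (hULip : ∀ j x x', ‖U j x - U j x'‖ ≤ C' * dist x x')
    (h : Λ → ℝ) (hpos : ∀ x, 0 < h x) (hhbdd : ∃ M, ∀ x, h x ≤ M)
    (B : ℝ) (hB : 0 ≤ B)
    (H : Λ → E) (hHbdd : ∃ M, ∀ x, ‖H x‖ ≤ M)
    (hHLip : ∀ x x', ‖H x - H x'‖ ≤ B * h x * dist x x') :
    ∀ x x',
      ‖(∑' j, Real.exp (φ j x) • (U j x (H (g j x)))) -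
        (∑' j, Real.exp (φ j x') • (U j x' (H (g j x'))))‖
      ≤ Real.exp (C * dist x x') *
          ((C + C') * (∑' j, Real.exp (φ j x) * ‖H (g j x)‖) +
            B * κ * (∑' j, Real.exp (φ j x) * h (g j x))) * dist x x' :=
  lasota_yorke_vector_general κ C C' g hg φ hφ hsum U hunit hULip h hpos hhbdd B hB H hHbdd hHLip
end
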